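/- Let θ be irrational with leaping subscripts I_j (where the partial quotients a_j = b_{I_j+1} tend to infinity, and all other partial quotients are bounded), and let φ = (rθ + m)/n be in reduced form. Then L(θ, φ) = 0 if and only if there exist infinitely many leapers ℒ_j = (p_{I_j}, q_{I_j}) such that g_j·ℒ_j ≡ (m, −r) (mod n) for some integer g_j invertible modulo n. -/

import Mathlib

noncomputable def distNearestInt (x : ℝ) : ℝ := |x - round x|

noncomputable def Lconst (θ φ : ℝ) : ℝ :=
  Filter.liminf (fun q : ℤ => |(q : ℝ)| * distNearestInt (q * θ - φ)) Filter.cofinite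

/-!
Write `e k = Q k * θ - P k` for the convergents `P k / Q k` of `θ`. The `e k` alternate in sign
and `Q (k+1) |e k| + Q k |e (k+1)| = 1`, so `Q k |e k|` lies between `1 / (b (k+1) + 2)` and
`1 / b (k+1)`: it is small exactly at the leapers.

If `|z| ‖zθ - φ‖` is small and `R` is the integer nearest to `zθ - φ`, then
`(nz - r)θ - (nR + m) = n (zθ - φ - R)`, and Legendre's theorem makes `(nR + m, nz - r)` a
multiple `g (P k, Q k)` of a convergent with `Q k |e k|` small, hence of a leaper; this multiple is
`≡ (m, -r) (mod n)`, and reducedness of `φ` makes `g` a unit mod `n`. Conversely, from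
`g (P k, Q k) ≡ (m, -r)` one gets `z = (g Q k + r) / n` with `|z| ‖zθ - φ‖ ≤ 4 Q k |e k|`.
An inhomogeneous Dirichlet argument keeps `|z| ‖zθ - φ‖ ≤ 2` for infinitely many `z`, so the
liminf is not a junk value.
-/

open Filter Topology

theorem distNearestInt_nonneg (x : ℝ) : 0 ≤ distNearestInt x := abs_nonneg _

theorem distNearestInt_le (x : ℝ) (M : ℤ) : distNearestInt x ≤ |x - M| := round_le x M

theorem distNearestInt_pos {x : ℝ} (hx : ∀ M : ℤ, x ≠ M) : 0 < distNearestInt x :=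
  abs_pos.2 (sub_ne_zero.2 (hx _))

theorem liminf_cofinite_eq_zero_iff {α : Type*} {f : α → ℝ} (hf : ∀ x, 0 ≤ f x) {c : ℝ}
    (hc : {x | f x ≤ c}.Infinite) :
    liminf f cofinite = 0 ↔ ∀ ε > 0, {x | f x < ε}.Infinite := by
  have h₁ : IsCoboundedUnder (· ≥ ·) cofinite f :=
    .of_frequently_le (frequently_cofinite_iff_infinite.2 hc)
  have h₂ : IsBoundedUnder (· ≥ ·) cofinite f := isBoundedUnder_of ⟨0, hf⟩
  rw [← (le_liminf_of_le h₁ (.of_forall hf)).ge_iff_eq', liminf_le_iff h₁ h₂]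
  simp only [frequently_cofinite_iff_infinite]

theorem intCast_mul_sub_ne_intCast {θ : ℝ} (hθ : Irrational θ) {n : ℕ} (hn : 2 ≤ n)
    {r m : ℤ} (hgcd : Int.gcd r (Int.gcd m n) = 1) (z M : ℤ) :
    z * θ - (r * θ + m) / n ≠ M := by
  intro heq
  have hn₀ : (n : ℝ) ≠ 0 := by positivity
  have key : ((n * z - r : ℤ) : ℝ) * θ = (n * M + m : ℤ) := by
    field_simp at heq; push_cast; linear_combination heq
  by_cases hz : n * z - r = 0
  · have hM : n * M + m = 0 := by
      rw [hz, Int.cast_zero, zero_mul] at key; exact_mod_cast key.symm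
    have hdvd : (n : ℤ) ∣ Int.gcd r (Int.gcd m n) :=
      Int.dvd_coe_gcd ⟨z, by linarith⟩ (Int.dvd_coe_gcd ⟨-M, by linarith⟩ dvd_rfl)
    rw [hgcd] at hdvd
    have := Int.le_of_dvd one_pos hdvd
    omega
  · exact (hθ.intCast_mul hz).ne_int _ key

theorem isUnit_intCast_of_modEq {n : ℕ} {r m g x y : ℤ} (hgcd : Int.gcd r (Int.gcd m n) = 1)
    (hx : g * x ≡ m [ZMOD n]) (hy : g * y ≡ -r [ZMOD n]) : IsUnit (g : ZMod n) := by
  rw [ZMod.coe_int_isUnit_iff_isCoprime, Int.isCoprime_iff_gcd_eq_one]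
  have hdn : (Int.gcd n g : ℤ) ∣ n := Int.gcd_dvd_left _ _
  have hdg : (Int.gcd n g : ℤ) ∣ g := Int.gcd_dvd_right _ _
  have hdm : (Int.gcd n g : ℤ) ∣ m := by
    simpa using dvd_add (hdn.trans hx.dvd) (hdg.mul_right x)
  have hdr : (Int.gcd n g : ℤ) ∣ r := by
    simpa using dvd_add (hdn.trans hy.dvd) (hdg.mul_right y)
  have := Int.dvd_coe_gcd hdr (Int.dvd_coe_gcd hdm hdn)
  rw [hgcd] at this
  exact Nat.dvd_one.mp (by exact_mod_cast this)

theorem neg_one_pow_sq {R : Type*} [Monoid R] [HasDistribNeg R] (k : ℕ) :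
    ((-1 : R) ^ k) ^ 2 = 1 := by
  rw [← pow_mul, mul_comm, pow_mul, neg_one_sq, one_pow]

theorem infinite_setOf_comp_of_forall_exists_lt {b : ℕ → ℤ} {I : ℕ → ℕ}
    (hI : StrictMono I)
    (hbdd : ∃ C : ℤ, ∀ i : ℕ, 1 ≤ i → (∀ j : ℕ, i ≠ I j + 1) → b i ≤ C)
    {G : ℕ → Prop} (hG : ∀ B, ∃ k, B < b (k + 1) ∧ G k) : {j | G (I j)}.Infinite := by
  obtain ⟨C, hC⟩ := hbdd
  refine Set.infinite_of_forall_exists_gt fun J ↦ ?_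
  obtain ⟨B, hB⟩ := ((Set.finite_Iic (I J + 1)).image b).bddAbove
  obtain ⟨k, hk, hGk⟩ := hG (max C B)
  -- `b (k + 1) > C` makes `k` a leaping subscript, and `b (k + 1) > B` puts it beyond `I J`
  obtain ⟨j, rfl⟩ : ∃ j, k = I j := by
    by_contra! hne
    exact (hC (k + 1) (by omega) fun j ↦ by simpa using hne j).not_gt
      ((le_max_left _ _).trans_lt hk)
  refine ⟨j, hGk, hI.lt_iff_lt.1 ?_⟩
  by_contra! hle
  exact (hB ⟨I j + 1, Set.mem_Iic.2 (by omega), rfl⟩).not_gt ((le_max_right _ _).trans_lt hk)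

structure IsContFracConvergents (θ : ℝ) (b P Q : ℕ → ℤ) : Prop where
  one_le_b : ∀ k, 1 ≤ b (k + 1)
  P_zero : P 0 = b 0
  Q_zero : Q 0 = 1
  P_one : P 1 = b 1 * b 0 + 1
  Q_one : Q 1 = b 1
  P_add_two : ∀ k, P (k + 2) = b (k + 2) * P (k + 1) + P k
  Q_add_two : ∀ k, Q (k + 2) = b (k + 2) * Q (k + 1) + Q k
  tendsto : Tendsto (fun k ↦ (P k : ℝ) / Q k) atTop (𝓝 θ)

namespace IsContFracConvergents

variable {θ : ℝ} {b P Q : ℕ → ℤ}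

theorem of_recurrence {p q : ℤ → ℤ}
    (hb : ∀ i : ℕ, 1 ≤ i → 1 ≤ b i) (hpm1 : p (-1) = 1) (hqm1 : q (-1) = 0)
    (hp0 : p 0 = b 0) (hq0 : q 0 = 1)
    (hprec : ∀ i : ℕ, p ((i : ℤ) + 1) = b (i + 1) * p i + p ((i : ℤ) - 1))
    (hqrec : ∀ i : ℕ, q ((i : ℤ) + 1) = b (i + 1) * q i + q ((i : ℤ) - 1))
    (hconv : Tendsto (fun i : ℕ => (p i : ℝ) / (q i : ℝ)) atTop (𝓝 θ)) :
    IsContFracConvergents θ b (fun k ↦ p k) (fun k ↦ q k) where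
  one_le_b k := hb (k + 1) k.succ_pos
  P_zero := hp0
  Q_zero := hq0
  P_one := by simpa [hp0, hpm1] using hprec 0
  Q_one := by simpa [hq0, hqm1] using hqrec 0
  P_add_two k := by simpa [add_assoc] using hprec (k + 1)
  Q_add_two k := by simpa [add_assoc] using hqrec (k + 1)
  tendsto := hconv

theorem Q_pos_and_le_succ (h : IsContFracConvergents θ b P Q) (k : ℕ) :
    0 < Q k ∧ Q k ≤ Q (k + 1) := by
  induction k with
  | zero => simp [h.Q_zero, h.Q_one, h.one_le_b 0]
  | succ k ih =>
    have := h.one_le_b (k + 1)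
    rw [h.Q_add_two]
    constructor <;> nlinarith

theorem Q_pos (h : IsContFracConvergents θ b P Q) (k : ℕ) : 0 < Q k :=
  (h.Q_pos_and_le_succ k).1

theorem Q_pos_real (h : IsContFracConvergents θ b P Q) (k : ℕ) : (0 : ℝ) < Q k := by
  exact_mod_cast h.Q_pos k

theorem monotone_Q (h : IsContFracConvergents θ b P Q) : Monotone Q :=
  monotone_nat_of_le_succ fun k ↦ (h.Q_pos_and_le_succ k).2

theorem b_mul_Q_le (h : IsContFracConvergents θ b P Q) (k : ℕ) :
    b (k + 1) * Q k ≤ Q (k + 1) := by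
  cases k with
  | zero => simp [h.Q_zero, h.Q_one]
  | succ k => rw [h.Q_add_two]; linarith [h.Q_pos k]

theorem Q_succ_le (h : IsContFracConvergents θ b P Q) (k : ℕ) :
    Q (k + 1) ≤ (b (k + 1) + 1) * Q k := by
  cases k with
  | zero => simp [h.Q_zero, h.Q_one]
  | succ k => rw [h.Q_add_two]; linarith [h.monotone_Q k.le_succ]

theorem le_Q (h : IsContFracConvergents θ b P Q) (k : ℕ) : (k : ℤ) ≤ Q k := by
  induction k with
  | zero => exact (h.Q_pos 0).le
  | succ k ih =>
    cases k with
    | zero => simpa [h.Q_one] using h.one_le_b 0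
    | succ k => rw [h.Q_add_two]; push_cast at ih ⊢; nlinarith [h.one_le_b (k + 1), h.Q_pos k]

theorem det (h : IsContFracConvergents θ b P Q) (k : ℕ) :
    P (k + 1) * Q k - P k * Q (k + 1) = (-1) ^ k := by
  induction k with
  | zero => rw [h.P_zero, h.Q_zero, h.P_one, h.Q_one]; ring
  | succ k ih => rw [h.P_add_two, h.Q_add_two]; linear_combination -ih

theorem isCoprime (h : IsContFracConvergents θ b P Q) (k : ℕ) : IsCoprime (P k) (Q k) :=
  ⟨-(-1) ^ k * Q (k + 1), (-1) ^ k * P (k + 1), by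
    linear_combination (-1) ^ k * h.det k + neg_one_pow_sq (R := ℤ) k⟩

theorem neg_one_pow_mul_div_add_two_sub_div_pos (h : IsContFracConvergents θ b P Q) (k : ℕ) :
    0 < (-1) ^ k * ((P (k + 2) : ℝ) / Q (k + 2) - P k / Q k) := by
  have hdet : (P (k + 2) * Q k - Q (k + 2) * P k : ℝ) = (-1) ^ k * b (k + 2) := by
    rw [h.P_add_two, h.Q_add_two]
    push_cast
    linear_combination (b (k + 2) : ℝ) * (by exact_mod_cast h.det k :
      (P (k + 1) * Q k - P k * Q (k + 1) : ℝ) = (-1) ^ k)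
  have hb : (0 : ℝ) < b (k + 2) := by exact_mod_cast h.one_le_b (k + 1)
  have := h.Q_pos_real k
  have := h.Q_pos_real (k + 2)
  rw [div_sub_div _ _ (by positivity) (by positivity), hdet, ← mul_div_assoc, ← mul_assoc,
    ← sq, neg_one_pow_sq, one_mul]
  positivity

theorem neg_one_pow_mul_sub_convergent_pos (h : IsContFracConvergents θ b P Q) (k : ℕ) :
    0 < (-1) ^ k * (Q k * θ - P k) := by
  set u : ℕ → ℝ := fun j ↦ (-1) ^ k * ((P (k + 2 * j) : ℝ) / Q (k + 2 * j))
  have hstep (j : ℕ) : u j < u (j + 1) := by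
    have := h.neg_one_pow_mul_div_add_two_sub_div_pos (k + 2 * j)
    rw [pow_add, pow_mul, neg_one_sq, one_pow, mul_one] at this
    simp only [u, show k + 2 * (j + 1) = k + 2 * j + 2 by ring]
    linarith
  have hlim : Tendsto u atTop (𝓝 ((-1) ^ k * θ)) :=
    (h.tendsto.comp (tendsto_atTop_mono (fun j ↦ show j ≤ k + 2 * j by omega)
      tendsto_id)).const_mul _
  have hle : u 1 ≤ (-1) ^ k * θ :=
    (monotone_nat_of_le_succ fun j ↦ (hstep j).le).ge_of_tendsto hlim 1
  have hu0 : u 0 = (-1) ^ k * ((P k : ℝ) / Q k) := by simp [u]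
  have hQ := h.Q_pos_real k
  have : 0 < (-1) ^ k * (θ - P k / Q k) := by linarith [hstep 0]
  calc (0 : ℝ) < Q k * ((-1) ^ k * (θ - P k / Q k)) := by positivity
    _ = (-1) ^ k * (Q k * θ - P k) := by field_simp

theorem abs_sub_convergent (h : IsContFracConvergents θ b P Q) (k : ℕ) :
    |Q k * θ - P k| = (-1) ^ k * (Q k * θ - P k) := by
  rw [← abs_of_pos (h.neg_one_pow_mul_sub_convergent_pos k), abs_mul, abs_neg_one_pow, one_mul]

theorem abs_sub_convergent_pos (h : IsContFracConvergents θ b P Q) (k : ℕ) :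
    0 < |Q k * θ - P k| :=
  h.abs_sub_convergent k ▸ h.neg_one_pow_mul_sub_convergent_pos k

theorem Q_succ_mul_abs_add_Q_mul_abs_eq_one (h : IsContFracConvergents θ b P Q) (k : ℕ) :
    Q (k + 1) * |Q k * θ - P k| + Q k * |Q (k + 1) * θ - P (k + 1)| = 1 := by
  have hdet : (P (k + 1) * Q k - P k * Q (k + 1) : ℝ) = (-1) ^ k := by exact_mod_cast h.det k
  rw [h.abs_sub_convergent, h.abs_sub_convergent, pow_succ]
  linear_combination (-1) ^ k * hdet + neg_one_pow_sq (R := ℝ) k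

theorem abs_sub_convergent_succ_lt (h : IsContFracConvergents θ b P Q) (k : ℕ) :
    |Q (k + 1) * θ - P (k + 1)| < |Q k * θ - P k| := by
  have hrec : (Q (k + 2) * θ - P (k + 2) : ℝ) =
      b (k + 2) * (Q (k + 1) * θ - P (k + 1)) + (Q k * θ - P k) := by
    rw [h.P_add_two, h.Q_add_two]; push_cast; ring
  have hb : (1 : ℝ) ≤ b (k + 2) := by exact_mod_cast h.one_le_b (k + 1)
  have h₂ := h.abs_sub_convergent_pos (k + 2)
  have h₁ := abs_nonneg (Q (k + 1) * θ - P (k + 1) : ℝ)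
  rw [h.abs_sub_convergent (k + 2), pow_add, neg_one_sq, mul_one, hrec] at h₂
  rw [h.abs_sub_convergent, pow_succ] at h₁
  rw [h.abs_sub_convergent, h.abs_sub_convergent, pow_succ]
  nlinarith

theorem b_mul_Q_mul_abs_lt_one (h : IsContFracConvergents θ b P Q) (k : ℕ) :
    b (k + 1) * (Q k * |Q k * θ - P k|) < 1 := by
  have hQ : (b (k + 1) * Q k : ℝ) ≤ Q (k + 1) := by exact_mod_cast h.b_mul_Q_le k
  have := h.Q_succ_mul_abs_add_Q_mul_abs_eq_one k
  have := mul_pos (h.Q_pos_real k) (h.abs_sub_convergent_pos (k + 1))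
  nlinarith [h.abs_sub_convergent_pos k]

theorem one_lt_b_add_two_mul_Q_mul_abs (h : IsContFracConvergents θ b P Q) (k : ℕ) :
    1 < (b (k + 1) + 2) * (Q k * |Q k * θ - P k|) := by
  have hQ : (Q (k + 1) : ℝ) ≤ (b (k + 1) + 1) * Q k := by exact_mod_cast h.Q_succ_le k
  have := h.Q_succ_mul_abs_add_Q_mul_abs_eq_one k
  have := mul_lt_mul_of_pos_left (h.abs_sub_convergent_succ_lt k) (h.Q_pos_real k)
  nlinarith [h.abs_sub_convergent_pos k]

theorem Q_mul_abs_lt_one (h : IsContFracConvergents θ b P Q) (k : ℕ) :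
    Q k * |Q k * θ - P k| < 1 := by
  have hb : (1 : ℝ) ≤ b (k + 1) := by exact_mod_cast h.one_le_b k
  nlinarith [h.b_mul_Q_mul_abs_lt_one k, h.Q_pos_real k, h.abs_sub_convergent_pos k]

theorem floor_eq (h : IsContFracConvergents θ b P Q) : ⌊θ⌋ = b 0 := by
  have hpos := h.neg_one_pow_mul_sub_convergent_pos 0
  have hlt := h.b_mul_Q_mul_abs_lt_one 0
  have hb : (1 : ℝ) ≤ b 1 := by exact_mod_cast h.one_le_b 0
  simp only [pow_zero, one_mul, h.P_zero, h.Q_zero, Int.cast_one] at hpos hlt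
  rw [abs_of_pos hpos] at hlt
  rw [Int.floor_eq_iff]
  constructor <;> nlinarith

theorem shift (h : IsContFracConvergents θ b P Q) :
    IsContFracConvergents (Int.fract θ)⁻¹ (fun k ↦ b (k + 1)) (fun k ↦ Q (k + 1))
      (fun k ↦ P (k + 1) - b 0 * Q (k + 1)) where
  one_le_b k := h.one_le_b (k + 1)
  P_zero := h.Q_one
  Q_zero := by simp only [h.P_one, h.Q_one]; ring
  P_one := by simp only [h.Q_add_two 0, h.Q_one, h.Q_zero]
  Q_one := by simp only [h.P_add_two 0, h.Q_add_two 0, h.P_one, h.Q_one, h.P_zero, h.Q_zero]; ring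
  P_add_two k := h.Q_add_two (k + 1)
  Q_add_two k := by simp only [h.P_add_two (k + 1), h.Q_add_two (k + 1)]; ring
  tendsto := by
    have hθ : θ - b 0 ≠ 0 := by
      simpa [h.P_zero, h.Q_zero] using (h.abs_sub_convergent_pos 0).ne'
    rw [Int.fract, h.floor_eq]
    refine (((h.tendsto.comp (tendsto_add_atTop_nat 1)).sub_const _).inv₀ hθ).congr fun k ↦ ?_
    have := (h.Q_pos_real (k + 1)).ne'
    simp only [Function.comp_apply, Int.cast_sub, Int.cast_mul]
    field_simp

theorem convergent_eq (h : IsContFracConvergents θ b P Q) (k : ℕ) :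
    θ.convergent k = (P k : ℚ) / Q k := by
  induction k generalizing θ b P Q with
  | zero => simp [h.floor_eq, h.P_zero, h.Q_zero]
  | succ k ih =>
    have := h.Q_pos (k + 1)
    rw [Real.convergent_succ, h.floor_eq, ih h.shift]
    push_cast
    field_simp
    ring

theorem exists_eq_mul_of_abs_mul_abs_sub_lt (h : IsContFracConvergents θ b P Q) {M N : ℤ}
    (hN : N ≠ 0) (hlt : |(N : ℝ)| * |N * θ - M| < 1 / 2) :
    ∃ k g, M = g * P k ∧ N = g * Q k := by
  set x : ℚ := M / N
  have hden : (x.den : ℝ) ≤ |(N : ℝ)| := by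
    have : (x.den : ℤ) ∣ N := by simpa [x, Rat.divInt_eq_div] using Rat.den_dvd M N
    exact_mod_cast Int.le_of_dvd (abs_pos.2 hN) ((dvd_abs _ _).2 this)
  have hNpos : (0 : ℝ) < |(N : ℝ)| := by positivity
  have happrox : |θ - x| < 1 / (2 * (x.den : ℝ) ^ 2) := by
    have hx : θ - x = (N * θ - M) / N := by
      simp only [x, Rat.cast_div, Rat.cast_intCast]; field_simp
    rw [hx, abs_div]
    calc |(N : ℝ) * θ - M| / |(N : ℝ)| < 1 / (2 * |(N : ℝ)| ^ 2) := by
          rw [div_lt_div_iff₀ hNpos (by positivity)]; nlinarith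
      _ ≤ 1 / (2 * (x.den : ℝ) ^ 2) := by gcongr
  obtain ⟨k, hk⟩ := Real.exists_rat_eq_convergent happrox
  rw [h.convergent_eq, div_eq_div_iff (by exact_mod_cast hN) (by exact_mod_cast (h.Q_pos k).ne')]
    at hk
  have hcross : M * Q k = P k * N := by exact_mod_cast hk
  obtain ⟨g, rfl⟩ := (h.isCoprime k).symm.dvd_of_dvd_mul_left ⟨M, by linarith⟩
  refine ⟨k, g, mul_right_cancel₀ (h.Q_pos k).ne' ?_, by ring⟩
  linear_combination hcross

theorem exists_abs_mul_sub_sub_le (h : IsContFracConvergents θ b P Q) (φ : ℝ) (k : ℕ) :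
    ∃ N M : ℤ, 0 ≤ N ∧ N < Q k ∧ |N * θ - φ - M| ≤ 2 / Q k := by
  obtain ⟨u, v, huv⟩ := h.isCoprime k
  set K := ⌊Q k * φ⌋
  set N := K * u % Q k
  have hQ := h.Q_pos k
  have hmod : N * P k ≡ K [ZMOD Q k] := calc
    N * P k ≡ K * u * P k [ZMOD Q k] := (Int.mod_modEq _ _).mul_right _
    _ = K + Q k * (-K * v) := by linear_combination K * huv
    _ ≡ K [ZMOD Q k] := by simp [Int.ModEq]
  obtain ⟨M, hM⟩ := hmod.symm.dvd
  have hN₀ : 0 ≤ N := Int.emod_nonneg _ hQ.ne'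
  have hNQ : N < Q k := Int.emod_lt_of_pos _ hQ
  refine ⟨N, M, hN₀, hNQ, ?_⟩
  have hQr := h.Q_pos_real k
  have hMr : (N * P k - K : ℝ) = Q k * M := by
    exact_mod_cast (by linarith : N * P k - K = Q k * M)
  have hK : |(K - Q k * φ : ℝ)| ≤ 1 := by
    rw [abs_le]; constructor <;> linarith [Int.floor_le (Q k * φ), Int.lt_floor_add_one (Q k * φ)]
  have hNe : (N : ℝ) * |Q k * θ - P k| ≤ 1 := by
    have : (N : ℝ) ≤ Q k := by exact_mod_cast hNQ.le
    nlinarith [h.Q_mul_abs_lt_one k, abs_nonneg (Q k * θ - P k : ℝ)]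
  have hid : (N * θ - φ - M : ℝ) = (N * (Q k * θ - P k) + (K - Q k * φ)) / Q k := by
    field_simp; linear_combination hMr
  rw [hid, abs_div, abs_of_pos hQr, div_le_div_iff_of_pos_right hQr]
  calc _ ≤ |(N : ℝ) * (Q k * θ - P k)| + |(K - Q k * φ : ℝ)| := abs_add_le _ _
    _ ≤ 2 := by
      rw [abs_mul, abs_of_nonneg (by exact_mod_cast hN₀ : (0 : ℝ) ≤ N)]; linarith

theorem infinite_setOf_abs_mul_distNearestInt_le_two (h : IsContFracConvergents θ b P Q)
    {φ : ℝ} (hpos : ∀ z : ℤ, 0 < distNearestInt (z * θ - φ)) :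
    {z : ℤ | |(z : ℝ)| * distNearestInt (z * θ - φ) ≤ 2}.Infinite := by
  set S := {z : ℤ | |(z : ℝ)| * distNearestInt (z * θ - φ) ≤ 2}
  have happrox (k : ℕ) : ∃ z ∈ S, distNearestInt (z * θ - φ) ≤ 2 / Q k := by
    obtain ⟨N, M, hN₀, hNQ, hNM⟩ := h.exists_abs_mul_sub_sub_le φ k
    have hdist := (distNearestInt_le _ M).trans hNM
    refine ⟨N, ?_, hdist⟩
    have hQ := h.Q_pos_real k
    have hN : |(N : ℝ)| ≤ Q k := by
      rw [abs_of_nonneg (by exact_mod_cast hN₀)]; exact_mod_cast hNQ.le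
    calc |(N : ℝ)| * distNearestInt (N * θ - φ) ≤ Q k * (2 / Q k) :=
          mul_le_mul hN hdist (distNearestInt_nonneg _) hQ.le
      _ = 2 := by field_simp
  intro hfin
  obtain ⟨z₀, -, hmin⟩ := S.exists_min_image (fun z : ℤ ↦ distNearestInt (z * θ - φ))
    hfin (let ⟨z, hz, _⟩ := happrox 0; ⟨z, hz⟩)
  have hδ := hpos z₀
  obtain ⟨k, hk⟩ := exists_nat_gt (2 / distNearestInt (z₀ * θ - φ))
  obtain ⟨z, hz, hzk⟩ := happrox k
  have hQk : (k : ℝ) ≤ Q k := by exact_mod_cast h.le_Q k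
  have := hmin z hz
  rw [div_lt_iff₀ hδ] at hk
  rw [le_div_iff₀ (h.Q_pos_real k)] at hzk
  nlinarith

theorem exists_modEq_of_abs_mul_distNearestInt_lt (h : IsContFracConvergents θ b P Q)
    {n : ℕ} {r m : ℤ} (hr : 0 ≤ r ∧ r < n) {φ : ℝ} (hφ : φ = (r * θ + m) / n)
    {z : ℤ} (hz : z ≠ 0)
    (hsmall : 2 * n ^ 2 * (|(z : ℝ)| * distNearestInt (z * θ - φ)) < 1 / 2) :
    ∃ k g, g * P k ≡ m [ZMOD n] ∧ g * Q k ≡ -r [ZMOD n] ∧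
      Q k * |Q k * θ - P k| ≤ 2 * n ^ 2 * (|(z : ℝ)| * distNearestInt (z * θ - φ)) := by
  set R := round (z * θ - φ)
  have hn : (0 : ℝ) < n := by exact_mod_cast hr.1.trans_lt hr.2
  have hid : ((n * z - r : ℤ) : ℝ) * θ - (n * R + m : ℤ) = n * (z * θ - φ - R) := by
    rw [hφ]; push_cast; field_simp; ring
  have hN : n * z - r ≠ 0 := by
    rcases hz.lt_or_gt with hz | hz <;> nlinarith [hr.1, hr.2]
  have hNle : |((n * z - r : ℤ) : ℝ)| ≤ 2 * n * |(z : ℝ)| := by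
    have hz1 : (1 : ℝ) ≤ |(z : ℝ)| := by exact_mod_cast Int.one_le_abs hz
    have hr' : |(r : ℝ)| ≤ n := by
      rw [abs_of_nonneg (by exact_mod_cast hr.1)]; exact_mod_cast hr.2.le
    push_cast
    calc |(n * z - r : ℝ)| ≤ |(n * z : ℝ)| + |(r : ℝ)| := abs_sub _ _
      _ ≤ 2 * n * |(z : ℝ)| := by rw [abs_mul, Nat.abs_cast]; nlinarith
  have hprod :
      |((n * z - r : ℤ) : ℝ)| * |((n * z - r : ℤ) : ℝ) * θ - (n * R + m : ℤ)| ≤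
      2 * n ^ 2 * (|(z : ℝ)| * distNearestInt (z * θ - φ)) := by
    rw [hid, abs_mul, Nat.abs_cast]
    have := distNearestInt_nonneg (z * θ - φ)
    calc _ ≤ 2 * n * |(z : ℝ)| * (n * |z * θ - φ - R|) := by gcongr
      _ = _ := by rw [distNearestInt]; ring
  obtain ⟨k, g, hM, hN'⟩ := h.exists_eq_mul_of_abs_mul_abs_sub_lt hN (hprod.trans_lt hsmall)
  refine ⟨k, g, ?_, ?_, hprod.trans' ?_⟩
  · rw [← hM]; exact (Int.modEq_iff_dvd.2 ⟨-R, by ring⟩)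
  · rw [← hN']; exact (Int.modEq_iff_dvd.2 ⟨-z, by ring⟩)
  · have hg : (1 : ℝ) ≤ |(g : ℝ)| := by
      exact_mod_cast Int.one_le_abs (left_ne_zero_of_mul (hN'.symm.trans_ne hN))
    rw [hM, hN']
    push_cast
    rw [show (g * Q k * θ - g * P k : ℝ) = g * (Q k * θ - P k) by ring, abs_mul, abs_mul,
      abs_of_pos (h.Q_pos_real k)]
    calc (Q k * |Q k * θ - P k| : ℝ)
        ≤ (|(g : ℝ)| * |(g : ℝ)|) * (Q k * |Q k * θ - P k|) :=
          le_mul_of_one_le_left (mul_nonneg (h.Q_pos_real k).le (abs_nonneg _))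
            (one_le_mul_of_one_le_of_one_le hg hg)
      _ = _ := by ring

theorem exists_lt_b_and_isUnit_modEq (h : IsContFracConvergents θ b P Q) {n : ℕ} {r m : ℤ}
    (hr : 0 ≤ r ∧ r < n) (hgcd : Int.gcd r (Int.gcd m n) = 1) {φ : ℝ}
    (hφ : φ = (r * θ + m) / n)
    (hsmall : ∀ ε > 0, {z : ℤ | |(z : ℝ)| * distNearestInt (z * θ - φ) < ε}.Infinite)
    (B : ℤ) :
    ∃ k, B < b (k + 1) ∧
      ∃ g : ℤ, IsUnit (g : ZMod n) ∧ g * P k ≡ m [ZMOD n] ∧ g * Q k ≡ -r [ZMOD n] := by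
  set B' : ℝ := max B 1
  have hB' : (1 : ℝ) ≤ B' := le_max_right _ _
  have hn : (0 : ℝ) < n := by exact_mod_cast hr.1.trans_lt hr.2
  set ε : ℝ := 1 / (2 * n ^ 2 * (B' + 2))
  obtain ⟨z, hzε, hz⟩ := ((hsmall ε (by positivity)).sdiff (Set.finite_singleton 0)).nonempty
  have hlt : 2 * n ^ 2 * (|(z : ℝ)| * distNearestInt (z * θ - φ)) < 1 / (B' + 2) := by
    have := mul_lt_mul_of_pos_left hzε (by positivity : (0 : ℝ) < 2 * n ^ 2)
    rwa [show 2 * n ^ 2 * ε = 1 / (B' + 2) by simp only [ε]; field_simp] at this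
  obtain ⟨k, g, hP, hQ, hk⟩ := h.exists_modEq_of_abs_mul_distNearestInt_lt hr hφ hz
    (hlt.trans_le (by rw [div_le_div_iff₀ (by positivity) (by positivity)]; linarith))
  refine ⟨k, ?_, g, isUnit_intCast_of_modEq hgcd hP hQ, hP, hQ⟩
  have hbig := h.one_lt_b_add_two_mul_Q_mul_abs k
  have hpos := mul_pos (h.Q_pos_real k) (h.abs_sub_convergent_pos k)
  have hb : B' < b (k + 1) := by
    rw [lt_div_iff₀ (by positivity)] at hlt
    nlinarith
  exact_mod_cast (le_max_left _ _).trans_lt hb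

theorem exists_le_and_abs_mul_distNearestInt_le (h : IsContFracConvergents θ b P Q) {n : ℕ}
    {r m : ℤ} (hr : 0 ≤ r ∧ r < n) {φ : ℝ} (hφ : φ = (r * θ + m) / n) {k : ℕ}
    {g : ℤ} (hP : g * P k ≡ m [ZMOD n]) (hQ : g * Q k ≡ -r [ZMOD n]) :
    ∃ z : ℤ, Q k ≤ z ∧
      |(z : ℝ)| * distNearestInt (z * θ - φ) ≤ 4 * (Q k * |Q k * θ - P k|) := by
  -- a representative of `g` in `[n, 2n)`, which makes `z ≥ Q k`
  set g' := g % n + n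
  have hn : (0 : ℤ) < n := hr.1.trans_lt hr.2
  have hg' : g' ≡ g [ZMOD n] := Int.add_modEq_right.trans (Int.mod_modEq _ _)
  have hg'n : n ≤ g' := by linarith [Int.emod_nonneg g hn.ne']
  have hg'2n : g' < 2 * n := by linarith [Int.emod_lt_of_pos g hn]
  obtain ⟨z, hz⟩ := ((hg'.mul_right _).trans hQ).symm.dvd
  obtain ⟨M, hM⟩ := ((hg'.mul_right _).trans hP).symm.dvd
  have hQk := h.Q_pos k
  have hzQ : Q k ≤ z := by nlinarith
  have hz2Q : z ≤ 2 * Q k := by nlinarith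
  refine ⟨z, hzQ, ?_⟩
  have hnr : (0 : ℝ) < n := by exact_mod_cast hn
  have hzr : (z : ℝ) = (g' * Q k + r) / n := by
    rw [eq_div_iff hnr.ne']; exact_mod_cast (by linarith : z * n = g' * Q k + r)
  have hMr : (M : ℝ) = (g' * P k - m) / n := by
    rw [eq_div_iff hnr.ne']; exact_mod_cast (by linarith : M * n = g' * P k - m)
  have hid : (z * θ - φ - M : ℝ) = g' / n * (Q k * θ - P k) := by
    rw [hzr, hMr, hφ]; field_simp; ring
  have hdist : distNearestInt (z * θ - φ) ≤ 2 * |Q k * θ - P k| := by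
    refine (distNearestInt_le _ M).trans ?_
    have hg'r : (0 : ℝ) < g' := by exact_mod_cast hn.trans_le hg'n
    rw [hid, abs_mul, abs_of_pos (div_pos hg'r hnr)]
    gcongr
    rw [div_le_iff₀ hnr]; exact_mod_cast hg'2n.le
  rw [abs_of_nonneg (by exact_mod_cast (hQk.trans_le hzQ).le)]
  calc (z : ℝ) * distNearestInt (z * θ - φ) ≤ (2 * Q k) * (2 * |Q k * θ - P k|) := by
        gcongr
        · exact distNearestInt_nonneg _
        · exact_mod_cast hz2Q
    _ = _ := by ring

theorem infinite_setOf_abs_mul_distNearestInt_lt (h : IsContFracConvergents θ b P Q) {n : ℕ}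
    {r m : ℤ} (hr : 0 ≤ r ∧ r < n) {φ : ℝ} (hφ : φ = (r * θ + m) / n) {I : ℕ → ℕ}
    (hI : StrictMono I) (ha : Tendsto (fun j ↦ b (I j + 1)) atTop atTop) {S : Set ℕ}
    (hS : S.Infinite)
    (hmod : ∀ j ∈ S, ∃ g : ℤ, g * P (I j) ≡ m [ZMOD n] ∧ g * Q (I j) ≡ -r [ZMOD n])
    (ε : ℝ) (hε : 0 < ε) :
    {z : ℤ | |(z : ℝ)| * distNearestInt (z * θ - φ) < ε}.Infinite := by
  obtain ⟨J, hJ⟩ := eventually_atTop.1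
    ((tendsto_intCast_atTop_atTop.comp ha).eventually_gt_atTop (4 / ε))
  refine Set.infinite_of_forall_exists_gt fun N ↦ ?_
  obtain ⟨j, hjS, hj⟩ := hS.exists_gt (max J N.toNat)
  obtain ⟨g, hP, hQ⟩ := hmod j hjS
  obtain ⟨z, hzQ, hz⟩ := h.exists_le_and_abs_mul_distNearestInt_le hr hφ hP hQ
  refine ⟨z, ?_, ?_⟩
  · have hb : 4 / ε < b (I j + 1) := hJ j (le_of_max_le_left hj.le)
    have := h.b_mul_Q_mul_abs_lt_one (I j)
    have := mul_pos (h.Q_pos_real (I j)) (h.abs_sub_convergent_pos (I j))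
    rw [div_lt_iff₀ hε] at hb
    show _ < ε
    nlinarith
  · have := h.le_Q (I j)
    have : j ≤ I j := hI.id_le j
    omega

end IsContFracConvergents

theorem Lconst_eq_zero_iff_leapers_general
    (θ : ℝ) (hθ : Irrational θ)
    (b : ℕ → ℤ) (hb : ∀ i : ℕ, 1 ≤ i → 1 ≤ b i)
    (p q : ℤ → ℤ)
    (hpm1 : p (-1) = 1) (hqm1 : q (-1) = 0)
    (hp0 : p 0 = b 0) (hq0 : q 0 = 1)
    (hprec : ∀ i : ℕ, p ((i : ℤ) + 1) = b (i + 1) * p i + p ((i : ℤ) - 1))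
    (hqrec : ∀ i : ℕ, q ((i : ℤ) + 1) = b (i + 1) * q i + q ((i : ℤ) - 1))
    (hconv : Filter.Tendsto (fun i : ℕ => (p i : ℝ) / (q i : ℝ)) Filter.atTop (nhds θ))
    -- leaping subscripts
    (I : ℕ → ℕ) (hI : StrictMono I)
    (ha : Filter.Tendsto (fun j : ℕ => b (I j + 1)) Filter.atTop Filter.atTop)
    (hbdd : ∃ C : ℤ, ∀ i : ℕ, 1 ≤ i → (∀ j : ℕ, i ≠ I j + 1) → b i ≤ C)
    -- φ = (rθ + m)/n in reduced form
    (n : ℕ) (hn : 2 ≤ n) (r m : ℤ)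
    (hr : 0 ≤ r ∧ r < n)
    (hgcd : Int.gcd r (Int.gcd m n) = 1)
    (φ : ℝ) (hφ : φ = (r * θ + m) / n) :
    Lconst θ φ = 0 ↔
      {j : ℕ | ∃ g : ℤ, IsUnit (g : ZMod n) ∧
        g * p (I j) ≡ m [ZMOD (n : ℤ)] ∧ g * q (I j) ≡ -r [ZMOD (n : ℤ)]}.Infinite := by
  have hcf := IsContFracConvergents.of_recurrence hb hpm1 hqm1 hp0 hq0 hprec hqrec hconv
  have hdist (z : ℤ) : 0 < distNearestInt (z * θ - φ) :=
    distNearestInt_pos (hφ ▸ intCast_mul_sub_ne_intCast hθ hn hgcd z)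
  rw [Lconst, liminf_cofinite_eq_zero_iff (fun z ↦ mul_nonneg (abs_nonneg _)
    (distNearestInt_nonneg _)) (hcf.infinite_setOf_abs_mul_distNearestInt_le_two hdist)]
  refine ⟨fun hsmall ↦ ?_, fun hS ↦ ?_⟩
  · exact infinite_setOf_comp_of_forall_exists_lt hI hbdd
      (hcf.exists_lt_b_and_isUnit_modEq hr hgcd hφ hsmall)
  · exact hcf.infinite_setOf_abs_mul_distNearestInt_lt hr hφ hI ha hS
      fun j ⟨g, _, hP, hQ⟩ ↦ ⟨g, hP, hQ⟩

/-- Theorem: in the leaper setting (partial quotients `b_{I_j+1}` tend to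
infinity along the strictly increasing leaping subscripts `I_j`, all other
partial quotients bounded), for `φ = (rθ+m)/n` in reduced form, `L(θ, φ) = 0`
if and only if there are infinitely many leapers `ℒ_j = (p_{I_j}, q_{I_j})` with
`g_j·ℒ_j ≡ (m, −r) (mod n)` for some `g_j` invertible modulo `n`. -/
theorem Lconst_eq_zero_iff_leapers
    (θ : ℝ) (hθ : Irrational θ)
    (b : ℕ → ℤ) (hb : ∀ i : ℕ, 1 ≤ i → 1 ≤ b i)
    (p q : ℤ → ℤ)
    (hpm1 : p (-1) = 1) (hqm1 : q (-1) = 0)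
    (hp0 : p 0 = b 0) (hq0 : q 0 = 1)
    (hprec : ∀ i : ℕ, p ((i : ℤ) + 1) = b (i + 1) * p i + p ((i : ℤ) - 1))
    (hqrec : ∀ i : ℕ, q ((i : ℤ) + 1) = b (i + 1) * q i + q ((i : ℤ) - 1))
    (hconv : Filter.Tendsto (fun i : ℕ => (p i : ℝ) / (q i : ℝ)) Filter.atTop (nhds θ))
    -- leaping subscripts
    (I : ℕ → ℕ) (hI : StrictMono I)
    (ha : Filter.Tendsto (fun j : ℕ => b (I j + 1)) Filter.atTop Filter.atTop)
    (hbdd : ∃ C : ℤ, ∀ i : ℕ, 1 ≤ i → (∀ j : ℕ, i ≠ I j + 1) → b i ≤ C)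
    -- φ = (rθ + m)/n in reduced form
    (n : ℕ) (hn : 2 ≤ n) (r m : ℤ)
    (hr : 0 ≤ r ∧ r < n) (hm : 0 ≤ m ∧ m < n)
    (hgcd : Int.gcd r (Int.gcd m n) = 1)
    (φ : ℝ) (hφ : φ = (r * θ + m) / n) :
    Lconst θ φ = 0 ↔
      {j : ℕ | ∃ g : ℤ, IsUnit (g : ZMod n) ∧
        g * p (I j) ≡ m [ZMOD (n : ℤ)] ∧ g * q (I j) ≡ -r [ZMOD (n : ℤ)]}.Infinite :=
  Lconst_eq_zero_iff_leapers_general θ hθ b hb p q hpm1 hqm1 hp0 hq0 hprec hqrec hconv I hI ha hbdd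
    n hn r m hr hgcd φ hφ
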